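/- Let m ≥ 1 and let T and d be positive integers. Assume there exists at least one sequence in (ℝ^m)^T that is persistently exciting of order d. Let u_0, …, u_{T−1} be independent ℝ^m-valued random variables on a probability space (Ω, ℱ, ℙ) such that, for each i, the law of u_i is absolutely continuous with respect to the Lebesgue measure on ℝ^m. Then, almost surely, the sequence (u_0, …, u_{T−1}) is persistently exciting of order d. -/

import Mathlib

/-!
A sequence is persistently exciting iff its window matrix `A` (one row per window, flattened)
has full column rank, i.e. iff `det (Aᵀ * A) ≠ 0`. This Gram determinant is a polynomial in the
entries of the sequence, and it is nonzero since one persistently exciting sequence exists. The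
zero set of a nonzero real polynomial is Lebesgue-null: for almost every value of the other
variables the leading coefficient in the first variable does not vanish, and what is left is a
nonzero univariate polynomial with finitely many roots. By independence the law of
`(u 0, …, u (T - 1))` is the product of the marginal laws, which is absolutely continuous with
respect to Lebesgue measure, so the zero set is null for it as well.
-/

open MeasureTheory

/-- A finite sequence `v` of length `T` in `ℝ^m` is persistently exciting of order
`d` if its `T - d + 1` windows of length `d` span the product space `(ℝ^m)^d`. -/
def IsPersistentlyExciting (m d T : ℕ) (v : Fin T → (Fin m → ℝ)) : Prop :=
  Submodule.span ℝ
    {w : Fin d → (Fin m → ℝ) | ∃ j : ℕ, ∃ hj : j + d ≤ T,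
      w = fun s : Fin d =>
        v ⟨j + s, lt_of_lt_of_le (Nat.add_lt_add_left s.isLt j) hj⟩} = ⊤

open scoped Matrix

universe u

namespace MeasureTheory.Measure.AbsolutelyContinuous

private theorem pi_fin : ∀ {n : ℕ} {α : Fin n → Type u} [∀ i, MeasurableSpace (α i)]
    {μ ν : ∀ i, Measure (α i)} [∀ i, SigmaFinite (μ i)] [∀ i, SigmaFinite (ν i)],
    (∀ i, μ i ≪ ν i) → Measure.pi μ ≪ Measure.pi ν
  | 0, _, _, μ, ν, _, _, _ => by rw [Measure.pi_of_empty μ, Measure.pi_of_empty ν]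
  | n + 1, _, _, μ, ν, _, _, h => by
    rw [← (measurePreserving_piFinSuccAbove μ 0).symm.map_eq,
      ← (measurePreserving_piFinSuccAbove ν 0).symm.map_eq]
    exact ((h 0).prod (pi_fin fun i => h _)).map (MeasurableEquiv.measurable _)

theorem pi {ι : Type*} [Fintype ι] {α : ι → Type u} [∀ i, MeasurableSpace (α i)]
    {μ ν : ∀ i, Measure (α i)} [∀ i, SigmaFinite (μ i)] [∀ i, SigmaFinite (ν i)]
    (h : ∀ i, μ i ≪ ν i) : Measure.pi μ ≪ Measure.pi ν := by
  let e := (Fintype.equivFin ι).symm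
  rw [← Measure.pi_map_piCongrLeft e μ, ← Measure.pi_map_piCongrLeft e ν]
  exact (pi_fin fun i => h (e i)).map (MeasurableEquiv.measurable _)

end MeasureTheory.Measure.AbsolutelyContinuous

theorem MeasureTheory.measurePreserving_curry (ι κ : Type*) {X : Type*} [Fintype ι] [Fintype κ]
    [MeasurableSpace X] (μ : ι → κ → Measure X) [∀ i j, SigmaFinite (μ i j)] :
    MeasurePreserving (MeasurableEquiv.curry ι κ X) (Measure.pi fun p : ι × κ => μ p.1 p.2)
      (Measure.pi fun i => Measure.pi (μ i)) := by
  refine MeasurePreserving.symm (MeasurableEquiv.curry ι κ X).symm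
    ⟨MeasurableEquiv.measurable _,
      (Measure.pi_eq (μ := fun p : ι × κ => μ p.1 p.2) fun s _ => ?_).symm⟩
  have : (MeasurableEquiv.curry ι κ X).symm ⁻¹' Set.univ.pi s =
      Set.univ.pi fun i => Set.univ.pi fun j => s (i, j) := by
    ext x; simp
  rw [MeasurableEquiv.map_apply, this, Measure.pi_pi, Fintype.prod_prod_type]
  simp_rw [Measure.pi_pi]

namespace MvPolynomial

private theorem ae_eval_ne_zero_fin : ∀ {n : ℕ} {p : MvPolynomial (Fin n) ℝ}, p ≠ 0 →
    ∀ᵐ x ∂(volume : Measure (Fin n → ℝ)), eval x p ≠ 0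
  | 0, p, hp => by
    obtain ⟨a, rfl⟩ := C_surjective (Fin 0) p
    simpa using hp
  | n + 1, p, hp => by
    set q := finSuccEquiv ℝ n p
    have hq : q.leadingCoeff ≠ 0 := by simpa [q] using hp
    have hslices : ∀ᵐ s ∂(volume : Measure (Fin n → ℝ)), ∀ᵐ y ∂(volume : Measure ℝ),
        eval (Fin.cons y s) p ≠ 0 := by
      filter_upwards [ae_eval_ne_zero_fin hq] with s hs
      have hqs : q.map (eval s) ≠ 0 := fun h => hs <| by
        simpa using congrArg (Polynomial.coeff · q.natDegree) h
      filter_upwards [(Polynomial.finite_setOfPred_isRoot hqs).countable.ae_notMem volume]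
        with y hy
      rwa [eval_eq_eval_mv_eval']
    have hS : MeasurableSet {x : Fin (n + 1) → ℝ | eval x p ≠ 0} :=
      (isOpen_ne_fun (continuous_eval p) (continuous_const (y := 0))).measurableSet
    have hcons : Measurable fun z : (Fin n → ℝ) × ℝ => (Fin.cons z.2 z.1 : Fin (n + 1) → ℝ) :=
      by fun_prop
    rw [← (volume_preserving_piFinSuccAbove (fun _ => ℝ) 0).symm.map_eq,
      (MeasurableEquiv.measurableEmbedding _).ae_map_iff, Measure.volume_eq_prod,
      Measure.ae_prod_iff_ae_ae]
    · simp only [MeasurableEquiv.piFinSuccAbove_symm_apply, Fin.insertNthEquiv_zero]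
      exact (Measure.ae_ae_comm (p := fun s y => eval (Fin.cons y s) p ≠ 0) (hcons hS)).mp
        hslices
    · exact (MeasurableEquiv.measurable _) hS

theorem ae_eval_ne_zero {σ : Type*} [Fintype σ] {p : MvPolynomial σ ℝ} (hp : p ≠ 0) :
    ∀ᵐ x ∂(volume : Measure (σ → ℝ)), eval x p ≠ 0 := by
  let e := Fintype.equivFin σ
  have hp' : rename e p ≠ 0 := by
    rwa [Ne, map_eq_zero_iff _ (rename_injective _ e.injective)]
  rw [← (volume_measurePreserving_piCongrLeft (fun _ => ℝ) e.symm).map_eq,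
    (MeasurableEquiv.measurableEmbedding _).ae_map_iff]
  filter_upwards [ae_eval_ne_zero_fin hp'] with x hx
  rw [eval_rename] at hx
  convert hx
  ext i
  simp [MeasurableEquiv.coe_piCongrLeft, Equiv.piCongrLeft_apply_eq_cast]

theorem ae_pi_eval_uncurry_ne_zero {ι κ : Type*} [Fintype ι] [Fintype κ]
    {μ : ι → Measure (κ → ℝ)} [∀ i, SigmaFinite (μ i)] (hμ : ∀ i, μ i ≪ volume)
    {p : MvPolynomial (ι × κ) ℝ} (hp : p ≠ 0) :
    ∀ᵐ v ∂Measure.pi μ, eval (Function.uncurry v) p ≠ 0 := by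
  have hvol : ∀ᵐ v ∂(volume : Measure (ι → κ → ℝ)), eval (Function.uncurry v) p ≠ 0 := by
    simp only [volume_pi]
    rw [← (measurePreserving_curry ι κ fun _ _ => volume).map_eq,
      (MeasurableEquiv.measurableEmbedding _).ae_map_iff]
    exact ae_eval_ne_zero hp
  exact (Measure.AbsolutelyContinuous.pi hμ).ae_le hvol

end MvPolynomial

namespace Matrix

theorem rank_eq_card_iff_det_ne_zero {n K : Type*} [Fintype n] [DecidableEq n] [Field K]
    (B : Matrix n n K) : B.rank = Fintype.card n ↔ B.det ≠ 0 := by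
  refine ⟨fun h => ?_, rank_of_det_ne_zero⟩
  have hsurj : Function.Surjective B.mulVec := by
    rw [← coe_mulVecLin, ← LinearMap.range_eq_top, Submodule.eq_top_iff_finrank_eq,
      Module.finrank_fintype_fun_eq_card]
    exact h
  exact ((isUnit_iff_isUnit_det B).mp (mulVec_surjective_iff_isUnit.mp hsurj)).ne_zero

theorem span_row_eq_top_iff_det_transpose_mul_self_ne_zero {m n K : Type*} [Fintype m]
    [Fintype n] [DecidableEq n] [Field K] [LinearOrder K] [IsStrictOrderedRing K]
    (A : Matrix m n K) : Submodule.span K (Set.range A.row) = ⊤ ↔ (Aᵀ * A).det ≠ 0 := by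
  rw [Submodule.eq_top_iff_finrank_eq, ← rank_eq_finrank_span_row,
    Module.finrank_fintype_fun_eq_card, ← rank_transpose_mul_self, rank_eq_card_iff_det_ne_zero]

end Matrix

/-- Rows are indexed by `Fin (T + 1 - d)` rather than `Fin (T - d + 1)`: under truncated
subtraction these are exactly the `j` with `j + d ≤ T` (none when `d > T`). -/
def windowMatrix {R : Type*} {T m : ℕ} (d : ℕ) (x : Fin T → Fin m → R) :
    Matrix (Fin (T + 1 - d)) (Fin d × Fin m) R :=
  fun j q => x ⟨j + q.1, by omega⟩ q.2

theorem isPersistentlyExciting_iff_span_row_windowMatrix {m d T : ℕ} (v : Fin T → Fin m → ℝ) :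
    IsPersistentlyExciting m d T v ↔
      Submodule.span ℝ (Set.range (windowMatrix d v).row) = ⊤ := by
  let L := LinearEquiv.curry ℝ ℝ (Fin d) (Fin m)
  have hwindows : {w : Fin d → (Fin m → ℝ) | ∃ j : ℕ, ∃ hj : j + d ≤ T,
      w = fun s : Fin d => v ⟨j + s, lt_of_lt_of_le (Nat.add_lt_add_left s.isLt j) hj⟩} =
      L '' Set.range (windowMatrix d v).row := by
    ext w
    constructor
    · rintro ⟨j, hj, rfl⟩
      exact ⟨_, ⟨⟨j, by omega⟩, rfl⟩, rfl⟩
    · rintro ⟨_, ⟨j, rfl⟩, rfl⟩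
      exact ⟨j, by omega, rfl⟩
  rw [IsPersistentlyExciting, hwindows, ← LinearEquiv.coe_toLinearMap, Submodule.span_image,
    Submodule.map_eq_top_iff]

open MvPolynomial in
noncomputable def gramPolynomial (m d T : ℕ) : MvPolynomial (Fin T × Fin m) ℝ :=
  let A := windowMatrix d fun i k => X (i, k)
  (Aᵀ * A).det

theorem eval_gramPolynomial {m d T : ℕ} (v : Fin T → Fin m → ℝ) :
    MvPolynomial.eval (Function.uncurry v) (gramPolynomial m d T) =
      ((windowMatrix d v)ᵀ * windowMatrix d v).det := by
  rw [gramPolynomial, RingHom.map_det, RingHom.mapMatrix_apply, Matrix.map_mul,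
    Matrix.transpose_map]
  congr <;> ext <;> simp [windowMatrix]

theorem isPersistentlyExciting_iff_eval_gramPolynomial_ne_zero {m d T : ℕ}
    (v : Fin T → Fin m → ℝ) :
    IsPersistentlyExciting m d T v ↔
      MvPolynomial.eval (Function.uncurry v) (gramPolynomial m d T) ≠ 0 := by
  rw [isPersistentlyExciting_iff_span_row_windowMatrix,
    Matrix.span_row_eq_top_iff_det_transpose_mul_self_ne_zero, eval_gramPolynomial]

theorem stmt_9_general (m d T : ℕ)
    (hex : ∃ v : Fin T → (Fin m → ℝ), IsPersistentlyExciting m d T v)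
    (Ω : Type*) [MeasurableSpace Ω] (P : Measure Ω) [IsProbabilityMeasure P]
    (u : Fin T → Ω → (Fin m → ℝ))
    (hmeas : ∀ i, Measurable (u i))
    (hindep : ProbabilityTheory.iIndepFun u P)
    (hac : ∀ i, P.map (u i) ≪ (volume : Measure (Fin m → ℝ))) :
    ∀ᵐ ω ∂P, IsPersistentlyExciting m d T (fun i => u i ω) := by
  obtain ⟨v₀, hv₀⟩ := hex
  have hp : gramPolynomial m d T ≠ 0 := by
    intro h
    simpa [h] using (isPersistentlyExciting_iff_eval_gramPolynomial_ne_zero v₀).mp hv₀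
  have hlaw : P.map (fun ω i => u i ω) = Measure.pi fun i => P.map (u i) :=
    (ProbabilityTheory.iIndepFun_iff_map_fun_eq_pi_map fun i => (hmeas i).aemeasurable).mp hindep
  have : ∀ i, IsProbabilityMeasure (P.map (u i)) :=
    fun i => Measure.isProbabilityMeasure_map (hmeas i).aemeasurable
  refine ae_of_ae_map (measurable_pi_lambda _ hmeas).aemeasurable ?_
  rw [hlaw]
  filter_upwards [MvPolynomial.ae_pi_eval_uncurry_ne_zero hac hp] with v hv
  exact (isPersistentlyExciting_iff_eval_gramPolynomial_ne_zero v).mpr hv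

/-- Lemma 1 for U = ℝ^m: if some persistently exciting sequence of
order d and length T exists, then independent ℝ^m-valued random variables
u₀,…,u_{T-1} with laws absolutely continuous with respect to Lebesgue measure are
almost surely persistently exciting of order d. -/
theorem stmt_9 (m d T : ℕ) (hm : 1 ≤ m) (hd : 1 ≤ d) (hT : 1 ≤ T)
    (hex : ∃ v : Fin T → (Fin m → ℝ), IsPersistentlyExciting m d T v)
    (Ω : Type*) [MeasurableSpace Ω] (P : Measure Ω) [IsProbabilityMeasure P]
    (u : Fin T → Ω → (Fin m → ℝ))
    (hmeas : ∀ i, Measurable (u i))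
    (hindep : ProbabilityTheory.iIndepFun u P)
    (hac : ∀ i, P.map (u i) ≪ (volume : Measure (Fin m → ℝ))) :
    ∀ᵐ ω ∂P, IsPersistentlyExciting m d T (fun i => u i ω) :=
  stmt_9_general m d T hex Ω P u hmeas hindep hac
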